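/- arXiv:2508.11164 — 2 statements merged into one kernel-verified Lean document; each statement's English description precedes it below -/
import Mathlib

section
/- Let G be a Hajós group, let Cay(G,S) be a connected non-complete Cayley graph of G, and let C be a perfect code in Cay(G,S). If |S₀| is a prime, then S₀ is aperiodic and C = g + L_C for some element g of G; in particular, C is a coset of a subgroup of G. -/
open Pointwise

/-- `G = A ⊕ B`: every element of `G` can be written uniquely as `a + b`
with `a ∈ A` and `b ∈ B`. -/
def IsFactorization {G : Type*} [AddCommGroup G] (A B : Set G) : Prop :=
  ∀ g : G, ∃! ab : G × G, ab.1 ∈ A ∧ ab.2 ∈ B ∧ ab.1 + ab.2 = g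

/-- The subgroup of periods `L_A = {g : g + A = A}` of a subset `A`. -/
def periods {G : Type*} [AddCommGroup G] (A : Set G) : AddSubgroup G :=
  AddAction.stabilizer G A

/-- A subset is periodic if it has a non-zero period. -/
def IsPeriodic {G : Type*} [AddCommGroup G] (A : Set G) : Prop :=
  periods A ≠ ⊥

/-- A Hajós group: a (finite abelian) group in which, for every factorization,
at least one factor is periodic. -/
def IsHajos (G : Type*) [AddCommGroup G] : Prop :=
  ∀ A B : Set G, IsFactorization A B → IsPeriodic A ∨ IsPeriodic B

/-- `C` is a perfect code in the Cayley graph `Cay(G,S)`: every element of `G`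
can be written uniquely as `s + c` with `s ∈ S₀ = S ∪ {0}` and `c ∈ C`. -/
def IsPerfectCode {G : Type*} [AddCommGroup G] (S C : Set G) : Prop :=
  IsFactorization (insert 0 S) C

/-- `A = X ⊕ Y` for subsets: `X + Y = A` and representations are unique. -/
def IsSubsetDirectSum {G : Type*} [AddCommGroup G] (X Y A : Set G) : Prop :=
  X + Y = A ∧
    ∀ x₁ ∈ X, ∀ y₁ ∈ Y, ∀ x₂ ∈ X, ∀ y₂ ∈ Y,
      x₁ + y₁ = x₂ + y₂ → x₁ = x₂ ∧ y₁ = y₂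

/-!
A periodic set `A ∋ 0` is a union of cosets of `L_A`, so if `|A|` is prime then `A = L_A` is a
subgroup, and if it generates `G` it is all of `G`. As `S ≠ G ∖ {0}`, this makes `S₀ = S ∪ {0}`
aperiodic.

For the code, pass to `G ⧸ L_C`: there `S₀` maps injectively and `G ⧸ L_C = S₀/L_C ⊕ C/L_C`
with `C/L_C` aperiodic. The Hajós property descends to this quotient: it embeds into `G`
(finite abelian groups are self-dual), and a factorization of a subgroup `H` extends to one of
`G` through an aperiodic complement of `H`, which exists once `H` has an element of order
greater than `2`. In exponent `2` a factor `{x, y}` of prime size is periodic with period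
`x - y` anyway. So `S₀/L_C` is periodic, hence all of `G ⧸ L_C`, so `C/L_C` is a single
point and `C` is a coset of `L_C`.
-/

open Set Function

section DirectSum

variable {G : Type*} [AddCommGroup G] {X Y Z K T : Set G}

theorem isFactorization_iff_isSubsetDirectSum :
    IsFactorization X Y ↔ IsSubsetDirectSum X Y univ := by
  refine ⟨fun h => ⟨eq_univ_of_forall fun g => ?_, fun x₁ hx₁ y₁ hy₁ x₂ hx₂ y₂ hy₂ he => ?_⟩,
    fun ⟨hsum, huniq⟩ g => ?_⟩
  · obtain ⟨⟨x, y⟩, ⟨hx, hy, rfl⟩, -⟩ := h g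
    exact add_mem_add hx hy
  · exact Prod.ext_iff.1 ((h (x₁ + y₁)).unique (y₁ := (x₁, y₁)) (y₂ := (x₂, y₂))
      ⟨hx₁, hy₁, rfl⟩ ⟨hx₂, hy₂, he.symm⟩)
  · obtain ⟨x, hx, y, hy, rfl⟩ := mem_add.1 (hsum ▸ mem_univ g)
    exact ⟨(x, y), ⟨hx, hy, rfl⟩, fun ⟨x', y'⟩ ⟨hx', hy', he⟩ =>
      Prod.ext_iff.2 (huniq x' hx' y' hy' x hx y hy he)⟩

theorem isComplement_iff_isSubsetDirectSum :
    AddSubgroup.IsComplement X Y ↔ IsSubsetDirectSum X Y univ := by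
  refine ⟨fun h => ⟨h.add_eq, fun x₁ hx₁ y₁ hy₁ x₂ hx₂ y₂ hy₂ he => ?_⟩,
    fun ⟨hsum, huniq⟩ => ⟨fun ⟨x₁, y₁⟩ ⟨x₂, y₂⟩ he => ?_, fun g => ?_⟩⟩
  · have := h.1 (a₁ := (⟨x₁, hx₁⟩, ⟨y₁, hy₁⟩)) (a₂ := (⟨x₂, hx₂⟩, ⟨y₂, hy₂⟩)) he
    simp_all
  · obtain ⟨h₁, h₂⟩ := huniq x₁ x₁.2 y₁ y₁.2 x₂ x₂.2 y₂ y₂.2 he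
    exact Prod.ext (Subtype.ext h₁) (Subtype.ext h₂)
  · obtain ⟨x, hx, y, hy, rfl⟩ := mem_add.1 (hsum ▸ mem_univ g)
    exact ⟨(⟨x, hx⟩, ⟨y, hy⟩), rfl⟩

theorem IsSubsetDirectSum.symm (h : IsSubsetDirectSum X Y Z) : IsSubsetDirectSum Y X Z :=
  ⟨add_comm Y X ▸ h.1, fun y₁ hy₁ x₁ hx₁ y₂ hy₂ x₂ hx₂ he =>
    (h.2 x₁ hx₁ y₁ hy₁ x₂ hx₂ y₂ hy₂ (by rw [add_comm, he, add_comm])).symm⟩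

theorem IsSubsetDirectSum.add_right (hXY : IsSubsetDirectSum X Y K)
    (hKT : IsSubsetDirectSum K T Z) : IsSubsetDirectSum X (Y + T) Z := by
  refine ⟨by rw [← add_assoc, hXY.1, hKT.1], fun x₁ hx₁ w₁ hw₁ x₂ hx₂ w₂ hw₂ he => ?_⟩
  obtain ⟨y₁, hy₁, t₁, ht₁, rfl⟩ := mem_add.1 hw₁
  obtain ⟨y₂, hy₂, t₂, ht₂, rfl⟩ := mem_add.1 hw₂
  have hK : ∀ {x y}, x ∈ X → y ∈ Y → x + y ∈ K := fun hx hy => hXY.1 ▸ add_mem_add hx hy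
  obtain ⟨hxy, rfl⟩ := hKT.2 _ (hK hx₁ hy₁) t₁ ht₁ _ (hK hx₂ hy₂) t₂ ht₂
    (by simpa only [add_assoc] using he)
  obtain ⟨rfl, rfl⟩ := hXY.2 x₁ hx₁ y₁ hy₁ x₂ hx₂ y₂ hy₂ hxy
  exact ⟨rfl, rfl⟩

theorem IsSubsetDirectSum.image {H : Type*} [AddCommGroup H] {f : G →+ H} (hf : Injective f)
    (h : IsSubsetDirectSum X Y Z) : IsSubsetDirectSum (f '' X) (f '' Y) (f '' Z) := by
  refine ⟨by rw [← image_add, h.1], ?_⟩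
  rintro _ ⟨x₁, hx₁, rfl⟩ _ ⟨y₁, hy₁, rfl⟩ _ ⟨x₂, hx₂, rfl⟩ _ ⟨y₂, hy₂, rfl⟩ he
  obtain ⟨rfl, rfl⟩ := h.2 x₁ hx₁ y₁ hy₁ x₂ hx₂ y₂ hy₂ (hf (by simpa only [map_add] using he))
  exact ⟨rfl, rfl⟩

theorem IsSubsetDirectSum.nonempty_left (h : IsSubsetDirectSum X Y Z) (hZ : Z.Nonempty) :
    X.Nonempty :=
  (h.1 ▸ hZ).of_add_left

theorem IsSubsetDirectSum.nonempty_right (h : IsSubsetDirectSum X Y Z) (hZ : Z.Nonempty) :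
    Y.Nonempty :=
  (h.1 ▸ hZ).of_add_right

end DirectSum

section Periods

variable {G : Type*} [AddCommGroup G] {A : Set G}

theorem add_mem_of_mem_periods {g a : G} (hg : g ∈ periods A) (ha : a ∈ A) : g + a ∈ A :=
  (AddAction.mem_stabilizer_set.1 hg a).2 ha

theorem mem_periods_iff_forall_add_mem [Finite G] {g : G} :
    g ∈ periods A ↔ ∀ a ∈ A, g + a ∈ A :=
  AddAction.mem_stabilizer_set' A.toFinite

theorem periods_subset_of_zero_mem (h0 : (0 : G) ∈ A) : (periods A : Set G) ⊆ A :=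
  fun g hg => by simpa using add_mem_of_mem_periods hg h0

theorem card_periods_dvd_ncard (A : Set G) : Nat.card (periods A) ∣ A.ncard := by
  have h := AddSubgroup.card_add_eq_card_addSubgroup_add_card_quotient (periods A) A
  rw [periods, AddAction.add_stabilizer_self, Nat.card_coe_set_eq] at h
  exact Dvd.intro _ h.symm

theorem eq_univ_of_isPeriodic [Finite G] (h0 : (0 : G) ∈ A)
    (hgen : AddSubgroup.closure A = ⊤) (hp : A.ncard.Prime) (hper : IsPeriodic A) :
    A = univ := by
  have hcard : Nat.card (periods A) = A.ncard :=
    (hp.eq_one_or_self_of_dvd _ (card_periods_dvd_ncard A)).resolve_left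
      fun h1 => hper (AddSubgroup.eq_bot_of_card_eq _ h1)
  have hA : (periods A : Set G) = A :=
    eq_of_subset_of_ncard_le (periods_subset_of_zero_mem h0)
      (by rw [← hcard, ← Nat.card_coe_set_eq, SetLike.coe_sort_coe]) A.toFinite
  have htop := AddSubgroup.closure_eq (periods A)
  rw [hA, hgen] at htop
  rw [← hA, ← htop, AddSubgroup.coe_top]

theorem IsPeriodic.of_image {Γ : Type*} [AddCommGroup Γ] [Finite Γ] {ψ : Γ →+ G}
    (hψ : Injective ψ) {D : Set Γ} (hD : D.Nonempty) (h : IsPeriodic (ψ '' D)) :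
    IsPeriodic D := by
  unfold IsPeriodic at *
  contrapose! h
  refine eq_bot_iff.2 fun t ht => ?_
  obtain ⟨d₀, hd₀⟩ := hD
  obtain ⟨d₁, hd₁, he₁⟩ := add_mem_of_mem_periods ht (mem_image_of_mem ψ hd₀)
  have hd : d₁ - d₀ ∈ periods D := mem_periods_iff_forall_add_mem.2 fun d hd => by
    obtain ⟨d₂, hd₂, he₂⟩ := add_mem_of_mem_periods ht (mem_image_of_mem ψ hd)
    rwa [hψ (show ψ (d₁ - d₀ + d) = ψ d₂ by rw [map_add, map_sub, he₁, he₂]; abel)]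
  rw [h, AddSubgroup.mem_bot, sub_eq_zero] at hd
  rw [hd] at he₁
  simpa using he₁

end Periods

section QuotientByPeriods

variable {G : Type*} [AddCommGroup G] {A C : Set G}

local notation "π" => ((↑) : G → G ⧸ periods C)

theorem IsSubsetDirectSum.eq_of_neg_add_mem_periods {Z : Set G} (h : IsSubsetDirectSum A C Z)
    {a₁ a₂ c₁ c₂ : G} (ha₁ : a₁ ∈ A) (hc₁ : c₁ ∈ C) (ha₂ : a₂ ∈ A) (hc₂ : c₂ ∈ C)
    (hl : -(a₁ + c₁) + (a₂ + c₂) ∈ periods C) : a₁ = a₂ ∧ -c₁ + c₂ ∈ periods C := by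
  obtain ⟨h₁, -⟩ := h.2 a₂ ha₂ c₂ hc₂ a₁ ha₁ _ (add_mem_of_mem_periods hl hc₁) (by abel)
  refine ⟨h₁.symm, ?_⟩
  convert hl using 1
  rw [h₁]
  abel

theorem IsSubsetDirectSum.injOn_mk_periods (h : IsSubsetDirectSum A C univ) : InjOn π A := by
  obtain ⟨c, hc⟩ := h.nonempty_right univ_nonempty
  intro a₁ ha₁ a₂ ha₂ he
  refine (h.eq_of_neg_add_mem_periods ha₁ hc ha₂ hc ?_).1
  convert QuotientAddGroup.eq.1 he using 1
  abel

theorem IsSubsetDirectSum.image_mk_periods (h : IsSubsetDirectSum A C univ) :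
    IsSubsetDirectSum (π '' A) (π '' C) univ := by
  refine ⟨?_, ?_⟩
  · have hadd := image_add (QuotientAddGroup.mk' (periods C)) (s := A) (t := C)
    rw [QuotientAddGroup.coe_mk'] at hadd
    rw [← hadd, h.1, image_univ_of_surjective QuotientAddGroup.mk_surjective]
  · rintro _ ⟨a₁, ha₁, rfl⟩ _ ⟨c₁, hc₁, rfl⟩ _ ⟨a₂, ha₂, rfl⟩ _ ⟨c₂, hc₂, rfl⟩ he
    obtain ⟨rfl, hc⟩ := h.eq_of_neg_add_mem_periods ha₁ hc₁ ha₂ hc₂ (QuotientAddGroup.eq.1 he)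
    exact ⟨rfl, QuotientAddGroup.eq.2 hc⟩

theorem exists_eq_image_add_periods_of_image_mk_eq_singleton {q : G ⧸ periods C}
    (hC : π '' C = {q}) : ∃ g : G, C = (fun x => g + x) '' (periods C : Set G) := by
  obtain ⟨c, hc, rfl⟩ := (hC ▸ mem_singleton q : q ∈ π '' C)
  refine ⟨c, ext fun x => ⟨fun hx => ?_, fun hx => ?_⟩⟩
  · have hx' : π x ∈ π '' C := mem_image_of_mem π hx
    rw [hC, mem_singleton_iff] at hx'
    exact ⟨-c + x, QuotientAddGroup.eq.1 hx'.symm, add_neg_cancel_left c x⟩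
  · obtain ⟨l, hl, rfl⟩ := hx
    show c + l ∈ C
    rw [add_comm]
    exact add_mem_of_mem_periods hl hc

end QuotientByPeriods

section AperiodicComplement

variable {G : Type*} [AddCommGroup G]

theorem periods_inf_eq_bot_of_isSubsetDirectSum {K : AddSubgroup G} {T : Set G}
    (h : IsSubsetDirectSum K T univ) : periods T ⊓ K = ⊥ := by
  obtain ⟨o, ho⟩ := h.nonempty_right univ_nonempty
  refine eq_bot_iff.2 fun t ⟨htT, htK⟩ => ?_
  exact (h.2 t htK o ho 0 K.zero_mem _ (add_mem_of_mem_periods htT ho) (zero_add _).symm).1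

/-- The periods of `T` meet `H ⊔ P` trivially, so `P ⊔ L_T` is still disjoint from `H`, and
maximality of `P` gives `L_T ≤ P ≤ H ⊔ P`. -/
theorem periods_eq_bot_of_maximal_disjoint {H P : AddSubgroup G}
    (hP : Maximal (fun Q => Disjoint Q H) P) {T : Set G}
    (hT : IsSubsetDirectSum (H ⊔ P : AddSubgroup G) T univ) : periods T = ⊥ := by
  have hinf := periods_inf_eq_bot_of_isSubsetDirectSum hT
  have hdisj : Disjoint (P ⊔ periods T) H := by
    refine AddSubgroup.disjoint_def.2 fun {x} hx hxH => ?_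
    obtain ⟨p, hp, l, hl, rfl⟩ := AddSubgroup.mem_sup.1 hx
    have hl0 : l = 0 := by
      have hpK : p ∈ H ⊔ P := AddSubgroup.mem_sup_right hp
      have : l ∈ periods T ⊓ (H ⊔ P) :=
        ⟨hl, by simpa using sub_mem (AddSubgroup.mem_sup_left hxH) hpK⟩
      rwa [hinf] at this
    subst hl0
    rw [add_zero] at hxH ⊢
    exact AddSubgroup.disjoint_def.1 hP.1 hp hxH
  have hle : periods T ≤ H ⊔ P :=
    calc periods T ≤ P ⊔ periods T := le_sup_right
      _ ≤ P := hP.2 hdisj le_sup_left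
      _ ≤ H ⊔ P := le_sup_right
  rwa [inf_eq_left.2 hle] at hinf

theorem isSubsetDirectSum_insert_diff_zero {H P : AddSubgroup G} (hHP : Disjoint H P)
    {h₀ : G} (h₀H : h₀ ∈ H) :
    IsSubsetDirectSum H (insert h₀ ((P : Set G) \ {0})) (H ⊔ P : AddSubgroup G) := by
  refine ⟨Subset.antisymm ?_ fun x hx => ?_, ?_⟩
  · rintro _ ⟨h, hh, τ, hτ, rfl⟩
    rcases hτ with rfl | ⟨hτP, -⟩
    · exact AddSubgroup.mem_sup_left (add_mem hh h₀H)
    · exact add_mem (AddSubgroup.mem_sup_left hh) (AddSubgroup.mem_sup_right hτP)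
  · obtain ⟨h, hh, p, hp, rfl⟩ := AddSubgroup.mem_sup.1 hx
    by_cases hp0 : p = 0
    · exact ⟨h - h₀, sub_mem hh h₀H, h₀, mem_insert _ _, by simp [hp0]⟩
    · exact ⟨h, hh, p, Or.inr ⟨hp, hp0⟩, rfl⟩
  · intro h₁ hh₁ τ₁ hτ₁ h₂ hh₂ τ₂ hτ₂ he
    have key : ∀ ⦃h₁ h₂ p₁ p₂⦄, h₁ ∈ H → h₂ ∈ H → p₁ ∈ P → p₂ ∈ P →
        h₁ + p₁ = h₂ + p₂ → h₁ = h₂ ∧ p₁ = p₂ := fun h₁ h₂ p₁ p₂ hh₁ hh₂ hp₁ hp₂ he => by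
      simpa [Prod.ext_iff] using AddSubgroup.add_injective_of_disjoint hHP
        (a₁ := (⟨h₁, hh₁⟩, ⟨p₁, hp₁⟩)) (a₂ := (⟨h₂, hh₂⟩, ⟨p₂, hp₂⟩)) he
    rcases hτ₁ with rfl | ⟨hτ₁, hτ₁0⟩ <;> rcases hτ₂ with rfl | ⟨hτ₂, hτ₂0⟩
    · exact ⟨add_right_cancel he, rfl⟩
    · exact absurd (key (add_mem hh₁ h₀H) hh₂ P.zero_mem hτ₂ (by rwa [add_zero])).2.symm hτ₂0
    · exact absurd (key hh₁ (add_mem hh₂ h₀H) hτ₁ P.zero_mem (by rwa [add_zero])).2 hτ₁0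
    · exact key hh₁ hh₂ hτ₁ hτ₂ he

/-- A nonzero period `δ` moves `h₀` into `P`, and so does `-δ`; adding up, `h₀ + h₀ ∈ H ⊓ P`. -/
theorem periods_insert_diff_zero_eq_bot {H P : AddSubgroup G} (hHP : Disjoint H P)
    {h₀ : G} (h₀H : h₀ ∈ H) (h₀2 : h₀ + h₀ ≠ 0) :
    periods (insert h₀ ((P : Set G) \ {0})) = ⊥ := by
  have hP : ∀ δ ∈ periods (insert h₀ ((P : Set G) \ {0})), δ ≠ 0 → δ + h₀ ∈ P := by
    intro δ hδ hδ0
    rcases add_mem_of_mem_periods hδ (mem_insert h₀ _) with h | ⟨h, -⟩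
    · exact absurd (add_eq_right.1 h) hδ0
    · exact h
  refine eq_bot_iff.2 fun δ hδ => by_contra fun hδ0 => h₀2 ?_
  refine AddSubgroup.disjoint_def.1 hHP (add_mem h₀H h₀H) ?_
  have := add_mem (hP δ hδ hδ0) (hP (-δ) (neg_mem hδ) (neg_ne_zero.2 hδ0))
  convert this using 1
  abel

/-- For `A ⊆ K`, a period `t` of `A + T` translates `T` by an element of `K`,
which has to be a period of `A`. -/
theorem periods_add_eq_bot [Finite G] {K : AddSubgroup G} {A T : Set G} (hA : A ⊆ K)
    (hAper : periods A = ⊥) (hT : IsSubsetDirectSum K T univ) (hTper : periods T = ⊥) :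
    periods (A + T) = ⊥ := by
  refine eq_bot_iff.2 fun t ht => ?_
  rw [← hTper, mem_periods_iff_forall_add_mem]
  intro o ho
  obtain ⟨k, hk, o', ho', hko⟩ := mem_add.1 (hT.1 ▸ mem_univ (t + o))
  have hkA : k ∈ periods A := mem_periods_iff_forall_add_mem.2 fun a ha => by
    obtain ⟨a', ha', o'', ho'', he⟩ := mem_add.1 (add_mem_of_mem_periods ht (add_mem_add ha ho))
    have := hT.2 a' (hA ha') o'' ho'' (k + a) (add_mem hk (hA ha)) o' ho'
      (by rw [he, add_left_comm, ← hko]; abel)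
    exact this.1 ▸ ha'
  rw [hAper, AddSubgroup.mem_bot] at hkA
  rwa [← hko, hkA, zero_add]

theorem exists_aperiodic_complement [Finite G] (H : AddSubgroup G) {h₀ : G} (h₀H : h₀ ∈ H)
    (h₀2 : h₀ + h₀ ≠ 0) : ∃ T : Set G, IsSubsetDirectSum H T univ ∧ periods T = ⊥ := by
  obtain ⟨P, -, hP⟩ :=
    Finite.exists_le_maximal (p := fun Q : AddSubgroup G => Disjoint Q H) disjoint_bot_left
  obtain ⟨T, hT, -⟩ := AddSubgroup.exists_isComplement_right (H ⊔ P) 0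
  rw [isComplement_iff_isSubsetDirectSum] at hT
  have hHP : Disjoint H P := hP.1.symm
  have hTP := isSubsetDirectSum_insert_diff_zero hHP h₀H
  exact ⟨_, hTP.add_right hT, periods_add_eq_bot (hTP.1 ▸ subset_add_right _ H.zero_mem)
    (periods_insert_diff_zero_eq_bot hHP h₀H h₀2) hT (periods_eq_bot_of_maximal_disjoint hP hT)⟩

end AperiodicComplement

/-- Dualising `f` with characters into `ℂˣ` gives an injection `Q̂ ↪ Ĝ`, and finite abelian
groups are isomorphic to their duals. -/
theorem CommGroup.exists_injective_of_surjective {G Q : Type*} [CommGroup G] [CommGroup Q]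
    [Finite G] {f : G →* Q} (hf : Surjective f) : ∃ ψ : Q →* G, Injective ψ := by
  have : Finite Q := Finite.of_surjective f hf
  have : NeZero (Monoid.exponent G : ℂ) := ⟨Nat.cast_ne_zero.2 Monoid.exponent_ne_zero_of_finite⟩
  have : NeZero (Monoid.exponent Q : ℂ) := ⟨Nat.cast_ne_zero.2 Monoid.exponent_ne_zero_of_finite⟩
  obtain ⟨eG⟩ := monoidHom_mulEquiv_of_hasEnoughRootsOfUnity G ℂ
  obtain ⟨eQ⟩ := monoidHom_mulEquiv_of_hasEnoughRootsOfUnity Q ℂ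
  refine ⟨(eG.toMonoidHom.comp (MonoidHom.compHom' f)).comp eQ.symm.toMonoidHom, ?_⟩
  have hdual : Injective (MonoidHom.compHom' f : (Q →* ℂˣ) →* G →* ℂˣ) :=
    fun _ _ h => (MonoidHom.cancel_right hf).1 h
  exact eG.injective.comp (hdual.comp eQ.symm.injective)

theorem AddCommGroup.exists_injective_quotient {G : Type*} [AddCommGroup G] [Finite G]
    (L : AddSubgroup G) : ∃ ψ : G ⧸ L →+ G, Injective ψ := by
  obtain ⟨ψ, hψ⟩ := CommGroup.exists_injective_of_surjective
    (f := AddMonoidHom.toMultiplicative (QuotientAddGroup.mk' L))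
    (QuotientAddGroup.mk'_surjective L)
  exact ⟨AddMonoidHom.toMultiplicative.symm ψ, hψ⟩

theorem ncard_eq_two_of_forall_add_self_eq_zero {Q : Type*} [AddCommGroup Q] [Finite Q]
    (hQ : ∀ x : Q, x + x = 0) {A B : Set Q} (hAB : IsSubsetDirectSum A B univ)
    (hp : A.ncard.Prime) : A.ncard = 2 := by
  have : Fact A.ncard.Prime := ⟨hp⟩
  have hdvd : A.ncard ∣ Nat.card Q := by
    rw [← (isComplement_iff_isSubsetDirectSum.2 hAB).card_mul_card, Nat.card_coe_set_eq]
    exact dvd_mul_right _ _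
  obtain ⟨x, hx⟩ := exists_prime_addOrderOf_dvd_card' _ hdvd
  have h2 : addOrderOf x ∣ 2 := addOrderOf_dvd_of_nsmul_eq_zero (by rw [two_nsmul, hQ])
  exact (Nat.prime_dvd_prime_iff_eq hp Nat.prime_two).1 (hx ▸ h2)

theorem isPeriodic_of_forall_add_self_eq_zero {Q : Type*} [AddCommGroup Q] [Finite Q]
    (hQ : ∀ x : Q, x + x = 0) {A : Set Q} (hA : A.ncard = 2) : IsPeriodic A := by
  obtain ⟨x, y, hxy, rfl⟩ := ncard_eq_two.1 hA
  have hneg : ∀ z : Q, -z = z := fun z => neg_eq_of_add_eq_zero_left (hQ z)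
  refine fun hbot => hxy (sub_eq_zero.1 ?_)
  rw [← AddSubgroup.mem_bot, ← hbot, mem_periods_iff_forall_add_mem]
  rintro _ (rfl | rfl)
  · right
    rw [mem_singleton_iff, add_comm, ← add_sub_assoc, hQ, zero_sub, hneg]
  · left
    exact sub_add_cancel _ _

section Hajos

variable {G : Type*} [AddCommGroup G] [Finite G]

theorem IsHajos.isPeriodic_or_of_isSubsetDirectSum (hG : IsHajos G) {H : AddSubgroup G}
    {h₀ : G} (h₀H : h₀ ∈ H) (h₀2 : h₀ + h₀ ≠ 0) {A B : Set G} (hA : A ⊆ H)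
    (hAB : IsSubsetDirectSum A B H) : IsPeriodic A ∨ IsPeriodic B := by
  obtain ⟨T, hT, hTper⟩ := exists_aperiodic_complement H h₀H h₀2
  have hfact : IsFactorization (A + T) B :=
    isFactorization_iff_isSubsetDirectSum.2 (hAB.symm.add_right hT).symm
  refine or_iff_not_imp_left.2 fun hAper => (hG _ _ hfact).resolve_left ?_
  exact not_not.2 (periods_add_eq_bot hA (not_not.1 hAper) hT hTper)

theorem IsHajos.isPeriodic_or_of_quotient (hG : IsHajos G) {L : AddSubgroup G} {x : G ⧸ L}
    (hx : x + x ≠ 0) {A B : Set (G ⧸ L)} (hAB : IsSubsetDirectSum A B univ) :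
    IsPeriodic A ∨ IsPeriodic B := by
  obtain ⟨ψ, hψ⟩ := AddCommGroup.exists_injective_quotient L
  have hAB' := hAB.image hψ
  rw [image_univ, ← AddMonoidHom.coe_range] at hAB'
  have hA : ψ '' A ⊆ ψ.range := by rw [AddMonoidHom.coe_range]; exact image_subset_range _ _
  have hx' : ψ x + ψ x ≠ 0 := by rwa [← map_add, ne_eq, map_eq_zero_iff _ hψ]
  exact (hG.isPeriodic_or_of_isSubsetDirectSum (AddMonoidHom.mem_range.2 ⟨x, rfl⟩) hx' hA hAB').imp
    (IsPeriodic.of_image hψ (hAB.nonempty_left univ_nonempty))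
    (IsPeriodic.of_image hψ (hAB.nonempty_right univ_nonempty))

theorem IsHajos.isPeriodic_of_quotient_of_prime
    (hG : IsHajos G) {L : AddSubgroup G} {A B : Set (G ⧸ L)} (hAB : IsSubsetDirectSum A B univ)
    (hp : A.ncard.Prime) (hB : periods B = ⊥) : IsPeriodic A := by
  by_cases hQ : ∀ x : G ⧸ L, x + x = 0
  · exact isPeriodic_of_forall_add_self_eq_zero hQ
      (ncard_eq_two_of_forall_add_self_eq_zero hQ hAB hp)
  · obtain ⟨x, hx⟩ := not_forall.1 hQ
    exact (hG.isPeriodic_or_of_quotient hx hAB).resolve_right (not_not.2 hB)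

theorem IsHajos.exists_eq_image_add_periods
    (hG : IsHajos G) {A C : Set G} (hAC : IsSubsetDirectSum A C univ) (h0 : (0 : G) ∈ A)
    (hgen : AddSubgroup.closure A = ⊤) (hp : A.ncard.Prime) :
    ∃ g : G, C = (fun x => g + x) '' (periods C : Set G) := by
  have hquot := hAC.image_mk_periods
  have hp' : (((↑) : G → G ⧸ periods C) '' A).ncard.Prime := by
    rwa [hAC.injOn_mk_periods.ncard_image]
  have hper := hG.isPeriodic_of_quotient_of_prime hquot hp'
    (AddAction.stabilizer_image_coe_quotient C)
  have hgen' : AddSubgroup.closure (((↑) : G → G ⧸ periods C) '' A) = ⊤ := by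
    rw [← QuotientAddGroup.coe_mk', ← AddMonoidHom.map_closure, hgen,
      AddSubgroup.map_top_of_surjective _ (QuotientAddGroup.mk'_surjective _)]
  have h0' : (0 : G ⧸ periods C) ∈ ((↑) : G → G ⧸ periods C) '' A := ⟨0, h0, rfl⟩
  have huniv := eq_univ_of_isPeriodic h0' hgen' hp' hper
  obtain ⟨q, hq⟩ := AddSubgroup.isComplement_univ_left.1
    (isComplement_iff_isSubsetDirectSum.2 (huniv ▸ hquot))
  exact exists_eq_image_add_periods_of_image_mk_eq_singleton hq

end Hajos

/-- If `G` is a Hajós group, `Cay(G,S)` is a connected non-complete Cayley graph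
of `G`, `C` is a perfect code in it, and `|S₀|` is a prime, then `S₀` is
aperiodic and `C = g + L_C` for some `g ∈ G`; in particular `C` is a coset of a
subgroup of `G`. -/
theorem code_is_coset_of_prime_deg {G : Type*} [AddCommGroup G] [Fintype G]
    (hG : IsHajos G) (S C : Set G)
    (hconn : AddSubgroup.closure S = ⊤)
    (hncomp : S ⊂ {(0 : G)}ᶜ)
    (hC : IsPerfectCode S C)
    (hp : ((insert (0 : G) S).ncard).Prime) :
    ¬ IsPeriodic (insert (0 : G) S) ∧
      ∃ g : G, C = (fun x => g + x) '' (periods C : Set G) := by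
  have h0 : (0 : G) ∈ insert 0 S := mem_insert 0 S
  have hgen : AddSubgroup.closure (insert 0 S) = ⊤ :=
    top_unique (hconn ▸ AddSubgroup.closure_mono (subset_insert 0 S))
  refine ⟨fun hper => ?_,
    hG.exists_eq_image_add_periods (isFactorization_iff_isSubsetDirectSum.1 hC) h0 hgen hp⟩
  obtain ⟨x, hx0, hxS⟩ := exists_of_ssubset hncomp
  have hx : x ∈ insert 0 S := (eq_univ_of_isPeriodic h0 hgen hp hper).symm ▸ mem_univ x
  exact hx.elim hx0 hxS
end

section
/- Let p and q be distinct primes, let G = Z_p × Z_q, let S be a proper subset of G∖{0} that generates G, and let C ⊆ G with 0 ∈ C. Then C is a perfect code in Cay(G,S) if and only if one of the following holds: (1) there exist integers α_i (i ∈ [p]) with α_0 = 0 such that S₀ = {(i, α_i) : i ∈ [p]} and C = {(0, i) : i ∈ [q]}; (2) there exist integers α_i (i ∈ [q]) with α_0 = 0 such that S₀ = {(α_i, i) : i ∈ [q]} and C = {(i, 0) : i ∈ [p]}. (Integer entries are interpreted modulo the order of the corresponding coordinate.) -/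
/-!
For a factorization `A ⊕ B` of `G = Z_p × Z_q` and the character `ψ (a, b) = ζ_p ^ a * ζ_q ^ b`,
`(∑_A ψ) * (∑_B ψ) = ∑_G ψ = 0`, so `ψ` sums to zero over one factor. Galois conjugation, and
the fact that a polynomial of degree `< n` (`n` prime) vanishing at the primitive `n`-th roots
of unity is a multiple of `1 + X + ⋯ + X ^ (n - 1)`, show that a set with vanishing `ψ`-sum is
a union of cosets of `0 × Z_q` or of `Z_p × 0`. Counting with `|A| |B| = pq` rules out a
periodic `A = S₀` (it would be a subgroup, or all of `G`), so the code `B = C` is one of these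
two subgroups and `S₀` is a transversal of it, i.e. the graph of a function.
-/

open Pointwise

section RootsOfUnity

open Polynomial

theorem Polynomial.coeff_eq_coeff_of_cyclotomic_dvd {K : Type*} [Field K] {n : ℕ}
    (hn : n.Prime) {R : K[X]} (hR : R.natDegree < n) (hdvd : cyclotomic n K ∣ R)
    {i j : ℕ} (hi : i < n) (hj : j < n) : R.coeff i = R.coeff j := by
  have := Fact.mk hn
  obtain ⟨Q, rfl⟩ := hdvd
  have hQ : Q.natDegree = 0 := by
    rcases eq_or_ne Q 0 with rfl | hQ0
    · simp
    · rw [natDegree_mul (cyclotomic_ne_zero n K) hQ0, natDegree_cyclotomic,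
        Nat.totient_prime hn] at hR
      omega
  rw [eq_C_of_natDegree_eq_zero hQ, cyclotomic_prime, coeff_mul_C, coeff_mul_C]
  simp [coeff_X_pow, hi, hj]

theorem eq_of_forall_isPrimitiveRoot_sum_mul_pow_eq_zero {n : ℕ} [NeZero n] (hn : n.Prime)
    (c : ZMod n → ℂ) (h : ∀ ω : ℂ, IsPrimitiveRoot ω n → ∑ b, c b * ω ^ b.val = 0)
    (b b' : ZMod n) : c b = c b' := by
  set R : ℂ[X] := ∑ b, C (c b) * X ^ b.val
  have hcoeff (b : ZMod n) : R.coeff b.val = c b := by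
    simp [R, ZMod.val_injective n |>.eq_iff]
  have hdeg : R.natDegree < n := by
    refine lt_of_le_of_lt (natDegree_sum_le_of_forall_le _ _ (n := n - 1) fun b _ => ?_)
      (Nat.sub_lt hn.pos one_pos)
    exact (natDegree_C_mul_X_pow_le _ _).trans (Nat.le_sub_one_of_lt b.val_lt)
  have hdvd : cyclotomic n ℂ ∣ R := by
    rcases eq_or_ne R 0 with hR | hR
    · rw [hR]; exact dvd_zero _
    rw [cyclotomic_eq_prod_X_sub_primitiveRoots (Complex.isPrimitiveRoot_exp n hn.ne_zero),
      Finset.prod_eq_multiset_prod, Multiset.prod_X_sub_C_dvd_iff_le_roots hR,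
      Multiset.le_iff_subset (primitiveRoots n ℂ).nodup]
    intro ω hω
    rw [mem_roots hR, IsRoot, eval_finsetSum]
    simpa using h ω ((mem_primitiveRoots hn.pos).1 hω)
  rw [← hcoeff b, ← hcoeff b']
  exact coeff_eq_coeff_of_cyclotomic_dvd hn hdeg hdvd b.val_lt b'.val_lt

theorem IsPrimitiveRoot.sum_int_mul_pow_eq_zero {ι : Type*} (s : Finset ι) (F : ι → ℤ)
    (e : ι → ℕ) {n : ℕ} (hn : 0 < n) {ζ ζ' : ℂ} (hζ : IsPrimitiveRoot ζ n)
    (hζ' : IsPrimitiveRoot ζ' n) (h : ∑ i ∈ s, (F i : ℂ) * ζ ^ e i = 0) :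
    ∑ i ∈ s, (F i : ℂ) * ζ' ^ e i = 0 := by
  set P : ℚ[X] := ∑ i ∈ s, C (F i : ℚ) * X ^ e i
  have haeval (z : ℂ) : aeval z P = ∑ i ∈ s, (F i : ℂ) * z ^ e i := by simp [P]
  rw [← haeval] at h ⊢
  obtain ⟨Q, hQ⟩ := minpoly.dvd ℚ ζ h
  rw [hQ, map_mul, ← cyclotomic_eq_minpoly_rat hζ hn, cyclotomic_eq_minpoly_rat hζ' hn,
    minpoly.aeval, zero_mul]

theorem IsPrimitiveRoot.mul_of_coprime {p q : ℕ} (hco : p.Coprime q) {ζ η : ℂ}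
    (hζ : IsPrimitiveRoot ζ p) (hη : IsPrimitiveRoot η q) :
    IsPrimitiveRoot (ζ * η) (p * q) := by
  rw [IsPrimitiveRoot.iff_orderOf, (Commute.all ζ η).orderOf_mul_eq_mul_orderOf_of_coprime,
    hζ.eq_orderOf, hη.eq_orderOf]
  rwa [← hζ.eq_orderOf, ← hη.eq_orderOf]

/-- By the Chinese remainder theorem `ζ ^ a * η ^ b` is a power of the primitive `pq`-th root
`ζ * η`, so this is the Galois conjugation `ζ * η ↦ ζ * η'`. -/
theorem IsPrimitiveRoot.sum_int_mul_pow_mul_pow_eq_zero {ι : Type*} (s : Finset ι) (F : ι → ℤ)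
    (a b : ι → ℕ) {p q : ℕ} (hp : 0 < p) (hq : 0 < q) (hco : p.Coprime q) {ζ η η' : ℂ}
    (hζ : IsPrimitiveRoot ζ p) (hη : IsPrimitiveRoot η q) (hη' : IsPrimitiveRoot η' q)
    (h : ∑ i ∈ s, (F i : ℂ) * (ζ ^ a i * η ^ b i) = 0) :
    ∑ i ∈ s, (F i : ℂ) * (ζ ^ a i * η' ^ b i) = 0 := by
  let e i : ℕ := Nat.chineseRemainder hco (a i) (b i)
  have hpow {θ : ℂ} (hθ : IsPrimitiveRoot θ q) (i : ι) :
      (ζ * θ) ^ e i = ζ ^ a i * θ ^ b i := by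
    have hcrt := (Nat.chineseRemainder hco (a i) (b i)).2
    rw [mul_pow, pow_eq_pow_mod _ hζ.pow_eq_one, pow_eq_pow_mod _ hθ.pow_eq_one, hcrt.1, hcrt.2,
      ← pow_eq_pow_mod _ hζ.pow_eq_one, ← pow_eq_pow_mod _ hθ.pow_eq_one]
  simp only [← hpow hη, ← hpow hη'] at h ⊢
  exact sum_int_mul_pow_eq_zero s F e (Nat.mul_pos hp hq) (hζ.mul_of_coprime hco hη)
    (hζ.mul_of_coprime hco hη') h

end RootsOfUnity

theorem sub_eq_sub_of_sum_eq_zero {p q : ℕ} [NeZero p] [NeZero q] (hp : p.Prime)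
    (hq : q.Prime) (hpq : p ≠ q) {ζ η : ℂ} (hζ : IsPrimitiveRoot ζ p)
    (hη : IsPrimitiveRoot η q) (F : ZMod p × ZMod q → ℤ)
    (h : ∑ x, (F x : ℂ) * (ζ ^ x.1.val * η ^ x.2.val) = 0) (a a' : ZMod p) (b b' : ZMod q) :
    F (a, b) - F (a, b') = F (a', b) - F (a', b') := by
  set c : ZMod q → ℂ := fun b => ∑ a, (F (a, b) : ℂ) * ζ ^ a.val
  have hc (η' : ℂ) (hη' : IsPrimitiveRoot η' q) : ∑ b, c b * η' ^ b.val = 0 := by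
    have := hζ.sum_int_mul_pow_mul_pow_eq_zero Finset.univ F (fun x => x.1.val)
      (fun x => x.2.val) hp.pos hq.pos ((Nat.coprime_primes hp hq).2 hpq) hη hη' h
    rw [Fintype.sum_prod_type_right] at this
    simpa only [c, Finset.sum_mul, mul_assoc] using this
  have hdiff : ∑ x : ZMod p, ((F (x, b) - F (x, b') : ℤ) : ℂ) * ζ ^ x.val = 0 := by
    simp only [Int.cast_sub, sub_mul, Finset.sum_sub_distrib]
    exact sub_eq_zero.2 (eq_of_forall_isPrimitiveRoot_sum_mul_pow_eq_zero hq c hc b b')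
  exact_mod_cast eq_of_forall_isPrimitiveRoot_sum_mul_pow_eq_zero hp _
    (fun ζ' hζ' => hζ.sum_int_mul_pow_eq_zero _ _ _ hp.pos hζ' hdiff) a a'

theorem forall_eq_or_forall_eq_of_sub_eq_sub {α β : Type*} {F : α → β → ℤ}
    (h01 : ∀ a b, F a b = 0 ∨ F a b = 1)
    (hF : ∀ a a' b b', F a b - F a b' = F a' b - F a' b') :
    (∀ a b b', F a b = F a b') ∨ ∀ a a' b, F a b = F a' b := by
  by_contra! ⟨⟨a, b, b', hb⟩, ⟨a₁, a₂, b₀, ha⟩⟩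
  have := hF a a₁ b b'
  have := hF a a₂ b b'
  have := hF a₁ a₂ b b₀
  have := h01 a b; have := h01 a b'; have := h01 a₁ b; have := h01 a₁ b'
  have := h01 a₂ b; have := h01 a₂ b'; have := h01 a₁ b₀; have := h01 a₂ b₀
  omega

theorem index_ker_fst {G H : Type*} [AddGroup G] [AddGroup H] :
    (AddMonoidHom.fst G H).ker.index = Nat.card G := by
  rw [AddSubgroup.index_ker, AddMonoidHom.range_eq_top.2 Prod.fst_surjective,
    AddSubgroup.card_top]

theorem index_ker_snd {G H : Type*} [AddGroup G] [AddGroup H] :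
    (AddMonoidHom.snd G H).ker.index = Nat.card H := by
  rw [AddSubgroup.index_ker, AddMonoidHom.range_eq_top.2 Prod.snd_surjective,
    AddSubgroup.card_top]

section Periods

variable {G : Type*} [AddCommGroup G] {N : AddSubgroup G} {A : Set G}

theorem le_periods_iff : N ≤ periods A ↔ ∀ n ∈ N, ∀ a ∈ A, n + a ∈ A := by
  refine ⟨fun h n hn a ha => ?_, fun h n hn => ?_⟩
  · rw [← AddAction.mem_stabilizer_iff.1 (h hn)]
    exact Set.vadd_mem_vadd_set ha
  · refine AddAction.mem_stabilizer_iff.2 (Set.ext fun x => ?_)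
    rw [Set.mem_vadd_set_iff_neg_vadd_mem, vadd_eq_add]
    exact ⟨fun hx => by simpa using h n hn _ hx, fun hx => h (-n) (N.neg_mem hn) x hx⟩

theorem subset_of_le_periods (h : N ≤ periods A) (h0 : 0 ∈ A) : (N : Set G) ⊆ A :=
  fun n hn => by simpa using le_periods_iff.1 h n hn 0 h0

theorem card_dvd_ncard_of_le_periods [Finite G] (h : N ≤ periods A) :
    Nat.card N ∣ A.ncard := by
  have hA : A = QuotientAddGroup.mk ⁻¹' (QuotientAddGroup.mk '' A : Set (G ⧸ N)) := by
    refine (Set.subset_preimage_image _ _).antisymm ?_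
    rintro x ⟨a, ha, hax⟩
    simpa using le_periods_iff.1 h _ (QuotientAddGroup.eq.1 hax) a ha
  rw [← Nat.card_coe_set_eq, hA,
    Nat.card_congr (QuotientAddGroup.preimageMkEquivAddSubgroupProdSet N _), Nat.card_prod]
  exact dvd_mul_right _ _

end Periods

namespace IsFactorization

variable {G : Type*} [AddCommGroup G] {A B : Set G}

theorem bijective_add (h : IsFactorization A B) :
    Function.Bijective fun x : A × B => (x.1 : G) + x.2 := by
  refine ⟨fun x y hxy => ?_, fun g => ?_⟩
  · have := (h _).unique (y₁ := ((x.1 : G), (x.2 : G))) (y₂ := ((y.1 : G), (y.2 : G)))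
      ⟨x.1.2, x.2.2, rfl⟩ ⟨y.1.2, y.2.2, hxy.symm⟩
    simp only [Prod.mk.injEq] at this
    exact Prod.ext (Subtype.ext this.1) (Subtype.ext this.2)
  · obtain ⟨⟨a, b⟩, ⟨ha, hb, hab⟩, -⟩ := h g
    exact ⟨(⟨a, ha⟩, ⟨b, hb⟩), hab⟩

theorem ncard_mul_ncard (h : IsFactorization A B) : A.ncard * B.ncard = Nat.card G := by
  rw [← Nat.card_coe_set_eq, ← Nat.card_coe_set_eq, ← Nat.card_prod]
  exact Nat.card_congr (Equiv.ofBijective _ h.bijective_add)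

open scoped Classical in
theorem sum_mul_sum [Fintype G] {R : Type*} [CommSemiring R] (h : IsFactorization A B)
    (ψ : AddChar G R) : (∑ a : A, ψ a) * ∑ b : B, ψ b = ∑ g, ψ g := by
  rw [Fintype.sum_mul_sum, ← Fintype.sum_prod_type']
  simp_rw [← AddChar.map_add_eq_mul]
  exact Fintype.sum_bijective _ h.bijective_add _ _ fun _ => rfl

theorem not_le_periods_left [Finite G] {N : AddSubgroup G} (h : IsFactorization A B)
    (hN : N.index.Prime) (h0A : 0 ∈ A) (hAN : ¬A ⊆ N) (hA : A ≠ Set.univ) :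
    ¬N ≤ periods A := by
  intro hper
  obtain ⟨k, hk⟩ := card_dvd_ncard_of_le_periods hper
  have hkB : k * B.ncard = N.index := Nat.eq_of_mul_eq_mul_left Nat.card_pos <| by
    rw [N.card_mul_index, ← h.ncard_mul_ncard, hk]; ring
  rcases hN.eq_one_or_self_of_dvd k ⟨_, hkB.symm⟩ with rfl | rfl
  · refine hAN (Set.eq_of_subset_of_ncard_le (subset_of_le_periods hper h0A) ?_ A.toFinite ▸
      subset_rfl)
    rw [hk, mul_one]; rfl
  · refine hA (Set.eq_of_subset_of_ncard_le (Set.subset_univ A) ?_ (Set.toFinite _))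
    rw [Set.ncard_univ, ← N.card_mul_index, hk]

theorem eq_of_le_periods_right [Finite G] {N : AddSubgroup G} (h : IsFactorization A B)
    (hN : N.index.Prime) (h0A : 0 ∈ A) (h0B : 0 ∈ B) (hAN : ¬A ⊆ N) (hper : N ≤ periods B) :
    B = N := by
  obtain ⟨k, hk⟩ := card_dvd_ncard_of_le_periods hper
  have hAk : A.ncard * k = N.index := Nat.eq_of_mul_eq_mul_left Nat.card_pos <| by
    rw [N.card_mul_index, ← h.ncard_mul_ncard, hk]; ring
  rcases hN.eq_one_or_self_of_dvd _ ⟨_, hAk.symm⟩ with hA1 | hAi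
  · obtain ⟨a, rfl⟩ := Set.ncard_eq_one.1 hA1
    exact absurd (by simpa [Set.mem_singleton_iff.1 h0A] using N.zero_mem) hAN
  · obtain rfl : k = 1 := by
      rw [hAi] at hAk; exact (Nat.mul_eq_left hN.ne_zero).1 hAk
    refine (Set.eq_of_subset_of_ncard_le (subset_of_le_periods hper h0B) ?_ B.toFinite).symm
    rw [hk, mul_one]; rfl

end IsFactorization

theorem isFactorization_ker_iff {G H : Type*} [AddCommGroup G] [AddCommGroup H] {π : G →+ H}
    (hπ : Function.Surjective π) {A : Set G} :
    IsFactorization A π.ker ↔ ∀ h, ∃! a, a ∈ A ∧ π a = h := by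
  refine ⟨fun hA h => ?_, fun hA g => ?_⟩
  · obtain ⟨g, rfl⟩ := hπ h
    obtain ⟨⟨a, n⟩, ⟨ha, hn, rfl⟩, huniq⟩ := hA g
    refine ⟨a, ⟨ha, by simp [AddMonoidHom.mem_ker.1 hn]⟩, fun a' ⟨ha', hπa'⟩ => ?_⟩
    exact congrArg Prod.fst (huniq (a', a + n - a') ⟨ha', by simp [hπa'], add_sub_cancel _ _⟩)
  · obtain ⟨a, ⟨ha, hπa⟩, huniq⟩ := hA (π g)
    refine ⟨(a, g - a), ⟨ha, by simp [hπa], add_sub_cancel _ _⟩,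
      fun ⟨a', n'⟩ ⟨ha', hn', hsum⟩ => ?_⟩
    obtain rfl : a' = a := huniq a' ⟨ha', by simp [← hsum, AddMonoidHom.mem_ker.1 hn']⟩
    simp [← hsum]

section ZModProd

variable {p q : ℕ}

theorem ker_fst_eq [NeZero q] :
    ((AddMonoidHom.fst (ZMod p) (ZMod q)).ker : Set (ZMod p × ZMod q)) =
      {x | ∃ i < q, x = (0, (i : ZMod q))} := by
  ext ⟨a, b⟩
  simp only [SetLike.mem_coe, AddMonoidHom.mem_ker, AddMonoidHom.coe_fst, Set.mem_ofPred_eq,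
    Prod.mk.injEq]
  exact ⟨fun ha => ⟨b.val, b.val_lt, ha, by simp⟩, fun ⟨_, _, ha, _⟩ => ha⟩

theorem ker_snd_eq [NeZero p] :
    ((AddMonoidHom.snd (ZMod p) (ZMod q)).ker : Set (ZMod p × ZMod q)) =
      {x | ∃ i < p, x = ((i : ZMod p), 0)} := by
  ext ⟨a, b⟩
  simp only [SetLike.mem_coe, AddMonoidHom.mem_ker, AddMonoidHom.coe_snd, Set.mem_ofPred_eq,
    Prod.mk.injEq]
  exact ⟨fun hb => ⟨a.val, a.val_lt, by simp, hb⟩, fun ⟨_, _, _, hb⟩ => hb⟩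

variable [NeZero p] [NeZero q]

theorem forall_existsUnique_fst_and_zero_mem_iff {A : Set (ZMod p × ZMod q)} :
    ((∀ i : ZMod p, ∃! a, a ∈ A ∧ a.1 = i) ∧ (0 : ZMod p × ZMod q) ∈ A) ↔
      ∃ α : ℕ → ℤ, α 0 = 0 ∧ A = {x | ∃ i < p, x = ((i : ZMod p), (α i : ZMod q))} := by
  constructor
  · rintro ⟨hA, h0⟩
    choose f hf huniq using hA
    have hf0 : f 0 = 0 := (huniq 0 0 ⟨h0, rfl⟩).symm
    refine ⟨fun i => ((f i).2.val : ℤ), by simp [hf0], Set.ext fun x => ⟨fun hx => ?_, ?_⟩⟩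
    · refine ⟨x.1.val, x.1.val_lt, ?_⟩
      conv_lhs => rw [huniq x.1 x ⟨hx, rfl⟩]
      ext <;> simp [(hf _).2]
    · rintro ⟨i, -, rfl⟩
      convert (hf i).1 using 1
      ext <;> simp [(hf _).2]
  · rintro ⟨α, hα0, rfl⟩
    refine ⟨fun i => ⟨(i, α i.val), ⟨⟨i.val, i.val_lt, by simp⟩, rfl⟩, ?_⟩,
      ⟨0, NeZero.pos p, Prod.ext (by simp) (by simp [hα0])⟩⟩
    rintro _ ⟨⟨j, hj, rfl⟩, rfl⟩
    simp [ZMod.val_cast_of_lt hj]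

theorem forall_existsUnique_snd_and_zero_mem_iff {A : Set (ZMod p × ZMod q)} :
    ((∀ i : ZMod q, ∃! a, a ∈ A ∧ a.2 = i) ∧ (0 : ZMod p × ZMod q) ∈ A) ↔
      ∃ α : ℕ → ℤ, α 0 = 0 ∧ A = {x | ∃ i < q, x = ((α i : ZMod p), (i : ZMod q))} := by
  constructor
  · rintro ⟨hA, h0⟩
    choose f hf huniq using hA
    have hf0 : f 0 = 0 := (huniq 0 0 ⟨h0, rfl⟩).symm
    refine ⟨fun i => ((f i).1.val : ℤ), by simp [hf0], Set.ext fun x => ⟨fun hx => ?_, ?_⟩⟩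
    · refine ⟨x.2.val, x.2.val_lt, ?_⟩
      conv_lhs => rw [huniq x.2 x ⟨hx, rfl⟩]
      ext <;> simp [(hf _).2]
    · rintro ⟨i, -, rfl⟩
      convert (hf i).1 using 1
      ext <;> simp [(hf _).2]
  · rintro ⟨α, hα0, rfl⟩
    refine ⟨fun i => ⟨(α i.val, i), ⟨⟨i.val, i.val_lt, by simp⟩, rfl⟩, ?_⟩,
      ⟨0, NeZero.pos q, Prod.ext (by simp [hα0]) (by simp)⟩⟩
    rintro _ ⟨⟨j, hj, rfl⟩, rfl⟩
    simp [ZMod.val_cast_of_lt hj]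

open scoped Classical in
theorem ker_fst_le_periods_or_ker_snd_le_periods (hp : p.Prime) (hq : q.Prime) (hpq : p ≠ q)
    {ζ η : ℂ} (hζ : IsPrimitiveRoot ζ p) (hη : IsPrimitiveRoot η q)
    {T : Set (ZMod p × ZMod q)}
    (h : ∑ x : T, ζ ^ (x : ZMod p × ZMod q).1.val * η ^ (x : ZMod p × ZMod q).2.val = 0) :
    (AddMonoidHom.fst (ZMod p) (ZMod q)).ker ≤ periods T ∨
      (AddMonoidHom.snd (ZMod p) (ZMod q)).ker ≤ periods T := by
  set F : ZMod p × ZMod q → ℤ := fun x => if x ∈ T then 1 else 0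
  have hF (x) : x ∈ T ↔ F x = 1 := by by_cases hx : x ∈ T <;> simp [F, hx]
  have hsum : ∑ x, (F x : ℂ) * (ζ ^ x.1.val * η ^ x.2.val) = 0 := by
    rw [← h, ← Finset.sum_subtype (Finset.univ.filter (· ∈ T)) (by simp)
      (fun x => ζ ^ x.1.val * η ^ x.2.val), Finset.sum_filter]
    exact Finset.sum_congr rfl fun x _ => by by_cases hx : x ∈ T <;> simp [F, hx]
  rcases forall_eq_or_forall_eq_of_sub_eq_sub (F := fun a b => F (a, b))
    (fun a b => by by_cases hx : (a, b) ∈ T <;> simp [F, hx])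
    (sub_eq_sub_of_sum_eq_zero hp hq hpq hζ hη F hsum) with hcol | hrow
  · refine Or.inl (le_periods_iff.2 fun ⟨n₁, n₂⟩ hn ⟨a, b⟩ hx => ?_)
    obtain rfl : n₁ = 0 := hn
    rw [hF] at hx ⊢
    rwa [Prod.mk_add_mk, zero_add, hcol a _ b]
  · refine Or.inr (le_periods_iff.2 fun ⟨n₁, n₂⟩ hn ⟨a, b⟩ hx => ?_)
    obtain rfl : n₂ = 0 := hn
    rw [hF] at hx ⊢
    rwa [Prod.mk_add_mk, zero_add, hrow _ a]

open scoped Classical in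
theorem IsFactorization.exists_ker_le_periods (hp : p.Prime) (hq : q.Prime) (hpq : p ≠ q)
    {A B : Set (ZMod p × ZMod q)} (h : IsFactorization A B) :
    ∃ N : AddSubgroup (ZMod p × ZMod q),
      (N = (AddMonoidHom.fst _ _).ker ∨ N = (AddMonoidHom.snd _ _).ker) ∧
        (N ≤ periods A ∨ N ≤ periods B) := by
  have hζ := Complex.isPrimitiveRoot_exp p hp.ne_zero
  have hη := Complex.isPrimitiveRoot_exp q hq.ne_zero
  let ψ : AddChar (ZMod p × ZMod q) ℂ :=
    (AddChar.zmodChar p hζ.pow_eq_one).compAddMonoidHom (AddMonoidHom.fst _ _) *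
      (AddChar.zmodChar q hη.pow_eq_one).compAddMonoidHom (AddMonoidHom.snd _ _)
  have := Fact.mk hp.one_lt
  have hψ : ψ ≠ 1 := AddChar.ne_one_iff.2
    ⟨(1, 0), by simpa [ψ, AddChar.zmodChar_apply, ZMod.val_one] using hζ.ne_one hp.one_lt⟩
  have hprod := h.sum_mul_sum ψ
  rw [AddChar.sum_eq_zero_of_ne_one hψ] at hprod
  rcases mul_eq_zero.1 hprod with hT | hT <;>
    rcases ker_fst_le_periods_or_ker_snd_le_periods hp hq hpq hζ hη hT with hN | hN
  exacts [⟨_, Or.inl rfl, Or.inl hN⟩, ⟨_, Or.inr rfl, Or.inl hN⟩, ⟨_, Or.inl rfl, Or.inr hN⟩,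
    ⟨_, Or.inr rfl, Or.inr hN⟩]

theorem IsFactorization.eq_ker_fst_or_eq_ker_snd (hp : p.Prime) (hq : q.Prime) (hpq : p ≠ q)
    {A B : Set (ZMod p × ZMod q)} (h : IsFactorization A B) (h0A : 0 ∈ A) (h0B : 0 ∈ B)
    (hA : AddSubgroup.closure A = ⊤) (hAuniv : A ≠ Set.univ) :
    B = (AddMonoidHom.fst (ZMod p) (ZMod q)).ker ∨
      B = (AddMonoidHom.snd (ZMod p) (ZMod q)).ker := by
  obtain ⟨N, hN, hper⟩ := h.exists_ker_le_periods hp hq hpq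
  have hidx : N.index.Prime := by
    rcases hN with rfl | rfl
    · rwa [index_ker_fst, Nat.card_zmod]
    · rwa [index_ker_snd, Nat.card_zmod]
  have hAN : ¬A ⊆ N := fun hAN => by
    rw [← AddSubgroup.closure_le, hA, top_le_iff] at hAN
    rw [hAN, AddSubgroup.index_top] at hidx
    exact Nat.not_prime_one hidx
  have hB : B = N := hper.elim (absurd · (h.not_le_periods_left hidx h0A hAN hAuniv))
    (h.eq_of_le_periods_right hidx h0A h0B hAN)
  rcases hN with rfl | rfl
  exacts [Or.inl hB, Or.inr hB]

end ZModProd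

/-- Perfect codes in Cayley graphs of `Z_p × Z_q` for distinct primes `p`, `q`. -/
theorem perfect_code_Zp_Zq (p q : ℕ) (hp : p.Prime) (hq : q.Prime) (hpq : p ≠ q)
    (S : Set (ZMod p × ZMod q))
    (hS : S ⊂ {(0 : ZMod p × ZMod q)}ᶜ)
    (hgen : AddSubgroup.closure S = ⊤)
    (C : Set (ZMod p × ZMod q)) (h0C : (0 : ZMod p × ZMod q) ∈ C) :
    IsPerfectCode S C ↔
      ((∃ α : ℕ → ℤ, α 0 = 0 ∧
          insert 0 S = {x : ZMod p × ZMod q | ∃ i < p, x = ((i : ZMod p), (α i : ZMod q))} ∧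
          C = {x : ZMod p × ZMod q | ∃ i < q, x = (0, (i : ZMod q))}) ∨
        (∃ α : ℕ → ℤ, α 0 = 0 ∧
          insert 0 S = {x : ZMod p × ZMod q | ∃ i < q, x = ((α i : ZMod p), (i : ZMod q))} ∧
          C = {x : ZMod p × ZMod q | ∃ i < p, x = ((i : ZMod p), 0)})) := by
  have := NeZero.of_pos hp.pos
  have := NeZero.of_pos hq.pos
  have h0S : (0 : ZMod p × ZMod q) ∈ insert 0 S := Set.mem_insert _ _
  constructor
  · intro h
    have hgen₀ : AddSubgroup.closure (insert 0 S) = ⊤ :=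
      top_le_iff.1 (hgen ▸ AddSubgroup.closure_mono (Set.subset_insert _ _))
    have huniv : insert 0 S ≠ Set.univ := by
      obtain ⟨z, hz0, hzS⟩ := Set.exists_of_ssubset hS
      exact fun hU => (Set.mem_insert_iff.1 (hU ▸ Set.mem_univ z)).elim hz0 hzS
    rcases h.eq_ker_fst_or_eq_ker_snd hp hq hpq h0S h0C hgen₀ huniv with rfl | rfl
    · obtain ⟨α, hα0, hα⟩ := forall_existsUnique_fst_and_zero_mem_iff.1
        ⟨(isFactorization_ker_iff Prod.fst_surjective).1 h, h0S⟩
      exact Or.inl ⟨α, hα0, hα, ker_fst_eq⟩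
    · obtain ⟨α, hα0, hα⟩ := forall_existsUnique_snd_and_zero_mem_iff.1
        ⟨(isFactorization_ker_iff Prod.snd_surjective).1 h, h0S⟩
      exact Or.inr ⟨α, hα0, hα, ker_snd_eq⟩
  · rintro (⟨α, hα0, hα, rfl⟩ | ⟨α, hα0, hα, rfl⟩)
    · rw [IsPerfectCode, ← ker_fst_eq]
      exact (isFactorization_ker_iff Prod.fst_surjective).2
        (forall_existsUnique_fst_and_zero_mem_iff.2 ⟨α, hα0, hα⟩).1
    · rw [IsPerfectCode, ← ker_snd_eq]
      exact (isFactorization_ker_iff Prod.snd_surjective).2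
        (forall_existsUnique_snd_and_zero_mem_iff.2 ⟨α, hα0, hα⟩).1
end
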